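/- For every closed subset F of the circle S^1, the sigma-algebra \Sigma_F generated by half-open intervals with endpoints in F induces on F the standard Borel structure, i.e., the trace sigma-algebra \Sigma_F|_F coincides with the Borel sigma-algebra of the subspace F. -/
import Mathlib

open Set MeasureTheory

/-- The half-open cyclic interval `[a, b) = {a} ∪ {z : sbtw a z b}` on the circle. -/
def hoArc (a b : AddCircle (1 : ℝ)) : Set (AddCircle (1 : ℝ)) :=
  {a} ∪ {z | sbtw a z b}

/-- The sigma-algebra on the circle generated by the half-open cyclic intervals with
endpoints in `A`. -/
def sigmaHo (A : Set (AddCircle (1 : ℝ))) : MeasurableSpace (AddCircle (1 : ℝ)) :=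
  MeasurableSpace.generateFrom {S | ∃ a ∈ A, ∃ b ∈ A, S = hoArc a b}

lemma hoArc_self (a : AddCircle (1 : ℝ)) : hoArc a a = {a} := by
  ext z
  simp only [hoArc, Set.mem_union, Set.mem_singleton_iff, Set.mem_setOf_eq]
  exact ⟨fun h => h.resolve_right sbtw_irrefl_left_right, Or.inl⟩

lemma coe_toIcoMod' (a x : ℝ) :
    ((toIcoMod one_pos a x : ℝ) : AddCircle (1 : ℝ)) = (x : AddCircle (1 : ℝ)) := by
  set t := toIcoMod one_pos a x with htdef
  obtain ⟨z, hz⟩ := ((toIcoMod_eq_iff one_pos).mp htdef.symm).2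
  symm
  rw [QuotientAddGroup.eq_iff_sub_mem]
  refine AddSubgroup.mem_zmultiples_iff.mpr ⟨z, ?_⟩
  rw [zsmul_eq_mul, mul_one] at hz ⊢
  linarith

lemma coe_toIocMod' (a x : ℝ) :
    ((toIocMod one_pos a x : ℝ) : AddCircle (1 : ℝ)) = (x : AddCircle (1 : ℝ)) := by
  set t := toIocMod one_pos a x with htdef
  obtain ⟨z, hz⟩ := ((toIocMod_eq_iff one_pos).mp htdef.symm).2
  symm
  rw [QuotientAddGroup.eq_iff_sub_mem]
  refine AddSubgroup.mem_zmultiples_iff.mpr ⟨z, ?_⟩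
  rw [zsmul_eq_mul, mul_one] at hz ⊢
  linarith

lemma mem_hoArc {α β t : ℝ} (hab : α < β) (h1 : β < α + 1) (ht : t ∈ Set.Ico α (α + 1)) :
    (↑t : AddCircle (1 : ℝ)) ∈ hoArc ↑α ↑β ↔ t < β := by
  obtain ⟨ht1, ht2⟩ := ht
  have ht : t ∈ Set.Ico α (α+1) := ⟨ht1, ht2⟩
  have e1 : toIcoMod one_pos α t = t := (toIcoMod_eq_self one_pos).2 ht
  have e2 : toIocMod one_pos α β = β := (toIocMod_eq_self one_pos).2 ⟨hab, by linarith⟩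
  have e3 : toIocMod one_pos β α = α + 1 := by
    have h := toIocMod_add_right one_pos β α
    rw [← h]
    exact (toIocMod_eq_self one_pos).2 ⟨by linarith, by linarith⟩
  simp only [hoArc, Set.mem_union, Set.mem_singleton_iff, Set.mem_setOf_eq,
    sbtw_iff_btw_not_btw, QuotientAddGroup.btw_coe_iff]
  rw [e1, e2, e3, AddCircle.coe_eq_coe_iff_of_mem_Ico ht ⟨le_refl α, by linarith⟩]
  rcases le_or_gt β t with h | h
  · have e4 : toIcoMod one_pos β t = t := (toIcoMod_eq_self one_pos).2 ⟨h, by linarith⟩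
    rw [e4]
    constructor
    · rintro (rfl | ⟨h2, h3⟩)
      · linarith
      · exact absurd (by linarith : t ≤ α + 1) h3
    · intro h'; linarith
  · have e4 : toIcoMod one_pos β t = t + 1 := by
      have h' := toIcoMod_add_right one_pos β t
      rw [← h']
      exact (toIcoMod_eq_self one_pos).2 ⟨by linarith [ht.1], by linarith⟩
    rw [e4]
    constructor
    · intro _; exact h
    · intro _
      rcases eq_or_lt_of_le ht.1 with rfl | hlt
      · exact Or.inl rfl
      · exact Or.inr ⟨h.le, by intro hc; linarith⟩

lemma hoArc_coe {α β : ℝ} (hab : α < β) (h1 : β < α + 1) :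
    hoArc (↑α) (↑β) = (fun t : ℝ => (↑t : AddCircle (1 : ℝ))) '' Set.Ico α β := by
  ext z
  induction z using QuotientAddGroup.induction_on with
  | H t₀ =>
    set t := toIcoMod one_pos α t₀ with htdef
    have htt : (↑t : AddCircle (1 : ℝ)) = ↑t₀ := coe_toIcoMod' α t₀
    have htmem : t ∈ Set.Ico α (α + 1) := toIcoMod_mem_Ico one_pos α t₀
    rw [← htt, mem_hoArc hab h1 htmem]
    constructor
    · intro hlt
      exact ⟨t, ⟨htmem.1, hlt⟩, rfl⟩
    · rintro ⟨s, hs, hst⟩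
      have hs' : s ∈ Set.Ico α (α + 1) := ⟨hs.1, by linarith [hs.2]⟩
      have : s = t := (AddCircle.coe_eq_coe_iff_of_mem_Ico hs' htmem).1 hst
      linarith [hs.2]

lemma hoArc_measurableSet (a b : AddCircle (1 : ℝ)) : MeasurableSet (hoArc a b) := by
  rcases eq_or_ne a b with rfl | hab
  · rw [hoArc_self]
    exact measurableSet_singleton a
  · obtain ⟨α, rfl⟩ := QuotientAddGroup.mk_surjective a
    obtain ⟨β₀, rfl⟩ := QuotientAddGroup.mk_surjective b
    set β := toIocMod one_pos α β₀ with hβdef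
    have hb : (↑β : AddCircle (1 : ℝ)) = ↑β₀ := coe_toIocMod' α β₀
    have hβ : β ∈ Set.Ioc α (α + 1) := toIocMod_mem_Ioc one_pos α β₀
    have hne : β ≠ α + 1 := by
      intro h
      apply hab
      have : (↑β₀ : AddCircle (1 : ℝ)) = ↑(α + 1) := by rw [← hb, h]
      rw [this, AddCircle.coe_add_period]
    have hβlt : β < α + 1 := lt_of_le_of_ne hβ.2 hne
    have : hoArc (↑α) (↑β₀) = (fun t : ℝ => (↑t : AddCircle (1 : ℝ))) '' Set.Ico α β := by
      rw [← hb]; exact hoArc_coe hβ.1 hβlt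
    rw [this, ← Set.Ioo_insert_left hβ.1, Set.image_insert_eq]
    refine MeasurableSet.insert ?_ _
    exact ((QuotientAddGroup.isOpenMap_coe) _ isOpen_Ioo).measurableSet

/-- For a closed `F ⊆ S¹`, the trace on `F` of the sigma-algebra generated by half-open
intervals with endpoints in `F` is the Borel sigma-algebra of the subspace `F`. -/
theorem sigmaHo_trace_eq_borel (F : Set (AddCircle (1 : ℝ))) (hF : IsClosed F) :
    MeasurableSpace.comap (Subtype.val : F → AddCircle (1 : ℝ)) (sigmaHo F) = borel F := by
  have hBc : (inferInstance : MeasurableSpace (AddCircle (1:ℝ))) = borel (AddCircle (1:ℝ)) :=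
    BorelSpace.measurable_eq
  have hBF : (inferInstance : MeasurableSpace F) = borel F := BorelSpace.measurable_eq
  refine le_antisymm ?_ ?_
  · have h1 : sigmaHo F ≤ borel (AddCircle (1:ℝ)) := by
      refine MeasurableSpace.generateFrom_le ?_
      rintro S ⟨a, -, b, -, rfl⟩
      rw [← hBc]
      exact hoArc_measurableSet a b
    calc MeasurableSpace.comap (Subtype.val : F → AddCircle (1:ℝ)) (sigmaHo F)
        ≤ MeasurableSpace.comap Subtype.val (borel (AddCircle (1:ℝ))) :=
          MeasurableSpace.comap_mono h1
      _ = borel F := by rw [← hBc, ← hBF]; rfl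
  · set T := MeasurableSpace.comap (Subtype.val : F → AddCircle (1:ℝ)) (sigmaHo F) with hT
    have gen : ∀ a ∈ F, ∀ b ∈ F, MeasurableSet[T] (Subtype.val ⁻¹' hoArc a b) :=
      fun a ha b hb =>
        ⟨hoArc a b, MeasurableSpace.measurableSet_generateFrom ⟨a, ha, b, hb, rfl⟩, rfl⟩
    have sing : ∀ a ∈ F, MeasurableSet[T] (Subtype.val ⁻¹' {a}) := by
      intro a ha
      have := gen a ha a ha
      rwa [hoArc_self] at this
    have key : ∀ q r : ℝ, r < q + 1 →
        MeasurableSet[T]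
          (Subtype.val ⁻¹' ((fun t : ℝ => (↑t : AddCircle (1:ℝ))) '' Set.Ioo q r)) := by
      intro q r hqr
      by_cases hD : (Set.Ioo q r ∩ (fun t : ℝ => (↑t : AddCircle (1:ℝ))) ⁻¹' F).Nonempty
      · obtain ⟨t₀, ht₀⟩ := hD
        set D := Set.Ioo q r ∩ (fun t : ℝ => (↑t : AddCircle (1:ℝ))) ⁻¹' F with hDdef
        have hDsub : D ⊆ Set.Ioo q r := Set.inter_subset_left
        have hbddb : BddBelow D := ⟨q, fun t ht => (hDsub ht).1.le⟩
        have hbdda : BddAbove D := ⟨r, fun t ht => (hDsub ht).2.le⟩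
        set α := sInf D with hαdef
        set β := sSup D with hβdef
        have hclosed : IsClosed (Set.Icc q r ∩ (fun t : ℝ => (↑t : AddCircle (1:ℝ))) ⁻¹' F) :=
          isClosed_Icc.inter (hF.preimage (AddCircle.continuous_mk' 1))
        have hcl : closure D ⊆ Set.Icc q r ∩ (fun t : ℝ => (↑t : AddCircle (1:ℝ))) ⁻¹' F :=
          closure_minimal (Set.inter_subset_inter Set.Ioo_subset_Icc_self subset_rfl) hclosed
        have hα := hcl (csInf_mem_closure ⟨t₀, ht₀⟩ hbddb)
        have hβ := hcl (csSup_mem_closure ⟨t₀, ht₀⟩ hbdda)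
        have hαF : (↑α : AddCircle (1:ℝ)) ∈ F := hα.2
        have hβF : (↑β : AddCircle (1:ℝ)) ∈ F := hβ.2
        have hαle : ∀ t ∈ D, α ≤ t := fun t ht => csInf_le hbddb ht
        have hβge : ∀ t ∈ D, t ≤ β := fun t ht => le_csSup hbdda ht
        have hαβ : α ≤ β := le_trans (hαle t₀ ht₀) (hβge t₀ ht₀)
        have hαr : α < r := lt_of_le_of_lt (hαle t₀ ht₀) ht₀.1.2
        have hqβ : q < β := lt_of_lt_of_le ht₀.1.1 (hβge t₀ ht₀)
        have hqα : q ≤ α := hα.1.1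
        have hβr : β ≤ r := hβ.1.2
        have inj : ∀ s u : ℝ, s ∈ Set.Ico q (q+1) → u ∈ Set.Ico q (q+1) →
            (↑s : AddCircle (1:ℝ)) = ↑u → s = u := fun s u hs hu h =>
          (AddCircle.coe_eq_coe_iff_of_mem_Ico hs hu).1 h
        rcases eq_or_lt_of_le hαβ with heq | hlt
        · have hαD : α ∈ D := by
            have h1 : t₀ ≤ α := heq ▸ hβge t₀ ht₀
            have h2 : α ≤ t₀ := hαle t₀ ht₀
            have h3 : t₀ = α := le_antisymm h1 h2
            rwa [← h3]
          have hfe : (Subtype.val ⁻¹' ((fun t : ℝ => (↑t : AddCircle (1:ℝ))) '' Set.Ioo q r)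
                : Set F)
              = Subtype.val ⁻¹' {(↑α : AddCircle (1:ℝ))} := by
            ext ⟨z, hz⟩
            simp only [Set.mem_preimage, Set.mem_singleton_iff, Set.mem_image]
            constructor
            · rintro ⟨t, ht, rfl⟩
              have htD : t ∈ D := ⟨ht, hz⟩
              have h1 : t = α := le_antisymm (heq ▸ hβge t htD) (hαle t htD)
              rw [h1]
            · intro h
              exact ⟨α, hαD.1, h.symm⟩
          rw [hfe]
          exact sing _ hαF
        · have hβα1 : β < α + 1 := by linarith
          have harc : hoArc (↑α) (↑β) = (fun t : ℝ => (↑t : AddCircle (1:ℝ))) '' Set.Ico α β :=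
            hoArc_coe hlt hβα1
          set G := (fun t : ℝ => (↑t : AddCircle (1:ℝ))) '' Set.Ioo q r with hGdef
          have hfe : (Subtype.val ⁻¹' G : Set F) =
              ((Subtype.val ⁻¹' hoArc (↑α) (↑β)
                  ∪ Subtype.val ⁻¹' ({(↑β : AddCircle (1:ℝ))} ∩ G))
                \ Subtype.val ⁻¹' {(↑α : AddCircle (1:ℝ))})
              ∪ Subtype.val ⁻¹' ({(↑α : AddCircle (1:ℝ))} ∩ G) := by
            ext ⟨z, hz⟩
            simp only [Set.mem_preimage, Set.mem_union, Set.mem_diff, Set.mem_inter_iff,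
              Set.mem_singleton_iff]
            constructor
            · rintro ⟨t, ht, rfl⟩
              have htD : t ∈ D := ⟨ht, hz⟩
              have h1 : α ≤ t := hαle t htD
              have h2 : t ≤ β := hβge t htD
              rcases eq_or_lt_of_le h1 with heq1 | h1'
              · exact Or.inr ⟨by rw [← heq1], ⟨t, ht, rfl⟩⟩
              · have hne : ((↑t : AddCircle (1:ℝ))) ≠ (↑α : AddCircle (1:ℝ)) := by
                  intro h
                  have h3 : t = α := inj t α ⟨ht.1.le, by linarith [ht.2]⟩
                    ⟨hqα, by linarith⟩ h
                  linarith
                refine Or.inl ⟨?_, hne⟩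
                rcases eq_or_lt_of_le h2 with heq2 | h2'
                · exact Or.inr ⟨congrArg (fun s : ℝ => (↑s : AddCircle (1:ℝ))) heq2,
                    ⟨t, ht, rfl⟩⟩
                · refine Or.inl ?_
                  rw [harc]
                  exact ⟨t, ⟨h1'.le, h2'⟩, rfl⟩
            · rintro (⟨h1 | ⟨hzb, hbG⟩, h2⟩ | ⟨h1, h2⟩)
              · rw [harc] at h1
                obtain ⟨t, ht, htz⟩ := h1
                have htα : t ≠ α := by
                  intro h
                  apply h2
                  rw [← htz, h]
                exact ⟨t, ⟨lt_of_le_of_lt hqα (ht.1.lt_of_ne (Ne.symm htα)),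
                  lt_of_lt_of_le ht.2 hβr⟩, htz⟩
              · exact hbG
              · exact h2
          rw [hfe]
          have hb' : MeasurableSet[T]
              (Subtype.val ⁻¹' ({(↑β : AddCircle (1:ℝ))} ∩ G)) := by
            by_cases hbG : (↑β : AddCircle (1:ℝ)) ∈ G
            · rw [Set.inter_eq_self_of_subset_left (Set.singleton_subset_iff.2 hbG)]
              exact sing _ hβF
            · rw [Set.singleton_inter_eq_empty.2 hbG, Set.preimage_empty]
              exact MeasurableSet.empty
          have ha' : MeasurableSet[T]
              (Subtype.val ⁻¹' ({(↑α : AddCircle (1:ℝ))} ∩ G)) := by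
            by_cases haG : (↑α : AddCircle (1:ℝ)) ∈ G
            · rw [Set.inter_eq_self_of_subset_left (Set.singleton_subset_iff.2 haG)]
              exact sing _ hαF
            · rw [Set.singleton_inter_eq_empty.2 haG, Set.preimage_empty]
              exact MeasurableSet.empty
          exact (((gen _ hαF _ hβF).union hb').diff (sing _ hαF)).union ha'
      · have hfe : (Subtype.val ⁻¹' ((fun t : ℝ => (↑t : AddCircle (1:ℝ))) '' Set.Ioo q r)
            : Set F) = ∅ := by
          ext ⟨z, hz⟩
          simp only [Set.mem_preimage, Set.mem_image, Set.mem_empty_iff_false, iff_false,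
            not_exists, not_and]
          intro t ht htz
          exact hD ⟨t, ht, by simp only [Set.mem_preimage, htz]; exact hz⟩
        rw [hfe]
        exact MeasurableSet.empty
    show borel F ≤ T
    have hbF : borel F = MeasurableSpace.generateFrom {s : Set F | IsOpen s} := rfl
    rw [hbF]
    refine MeasurableSpace.generateFrom_le ?_
    intro s hs
    obtain ⟨V, hV, rfl⟩ := isOpen_induced_iff.1 hs
    have hsurj : Function.Surjective (fun t : ℝ => (↑t : AddCircle (1:ℝ))) := fun z =>
      QuotientAddGroup.induction_on z fun t => ⟨t, rfl⟩
    set W := (fun t : ℝ => (↑t : AddCircle (1:ℝ))) ⁻¹' V with hWdef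
    have hW : IsOpen W := hV.preimage (AddCircle.continuous_mk' 1)
    have hVW : V = (fun t : ℝ => (↑t : AddCircle (1:ℝ))) '' W :=
      (Set.image_preimage_eq V hsurj).symm
    have hdec : W = ⋃ (p : {p : ℚ × ℚ //
        Set.Ioo ((p.1 : ℝ)) ((p.2 : ℝ)) ⊆ W ∧ ((p.2 : ℝ) < (p.1 : ℝ) + 1)}),
        Set.Ioo ((p.1.1 : ℝ)) ((p.1.2 : ℝ)) := by
      ext x
      simp only [Set.mem_iUnion]
      constructor
      · intro hx
        obtain ⟨ε, hε, hball⟩ := Metric.isOpen_iff.1 hW x hx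
        set δ := min ε (1/2) with hδdef
        have hδ0 : 0 < δ := lt_min hε (by norm_num)
        obtain ⟨a, ha1, ha2⟩ := exists_rat_btwn (show x - δ < x by linarith)
        obtain ⟨b, hb1, hb2⟩ := exists_rat_btwn (show x < x + δ by linarith)
        have hδε : δ ≤ ε := min_le_left _ _
        have hsub : Set.Ioo (a:ℝ) (b:ℝ) ⊆ W := by
          intro y hy
          apply hball
          rw [Metric.mem_ball, Real.dist_eq, abs_lt]
          constructor
          · have : x - δ < y := lt_trans ha1 hy.1
            linarith
          · have : y < x + δ := lt_trans hy.2 hb2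
            linarith
        have hlen : (b:ℝ) < (a:ℝ) + 1 := by
          have hδh : δ ≤ 1/2 := min_le_right _ _
          linarith
        exact ⟨⟨(a, b), hsub, hlen⟩, ha2, hb1⟩
      · rintro ⟨p, hx⟩
        exact p.2.1 hx
    rw [hVW, hdec, Set.image_iUnion, Set.preimage_iUnion]
    exact MeasurableSet.iUnion fun p => key _ _ p.2.2
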